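/- For a vector ψ ∈ H_A⊗H_B⊗H_C, the tensor rank of ψ equals the minimum number of product vectors in H_B⊗H_C whose linear span contains the image of the linear map H_A* → H_B⊗H_C induced by ψ (equivalently, the support of the reduced density operator Tr_A|ψ⟩⟨ψ|). -/

import Mathlib

open TensorProduct

/-- Tripartite tensor rank: minimal number of product vectors summing to `ψ`. -/
noncomputable def tRank {A B C : Type*} [AddCommGroup A] [Module ℂ A]
    [AddCommGroup B] [Module ℂ B] [AddCommGroup C] [Module ℂ C]
    (ψ : A ⊗[ℂ] (B ⊗[ℂ] C)) : ℕ :=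
  sInf {r | ∃ (a : Fin r → A) (b : Fin r → B) (c : Fin r → C),
    ψ = ∑ i, a i ⊗ₜ[ℂ] (b i ⊗ₜ[ℂ] c i)}

/-! A tensor `ψ ∈ A ⊗ M` can be written as `∑ aᵢ ⊗ pᵢ` exactly when every contraction
`(f ⊗ id) ψ`, `f ∈ A*`, lies in the span of the `pᵢ`: expanding `ψ = ∑ⱼ eⱼ ⊗ (eⱼ* ⊗ id) ψ` in a
basis of `A` and each contraction in the `pᵢ` regroups into such a sum. With `M = B ⊗ C` and the
`pᵢ = bᵢ ⊗ cᵢ` product vectors, the two sets of lengths whose infima are compared coincide. -/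

namespace TensorProduct

variable {R A M : Type*} [CommSemiring R] [AddCommMonoid A] [Module R A]
  [AddCommMonoid M] [Module R M]

theorem eq_sum_basis_tmul_lid_map_coord {κ : Type*} [Fintype κ] (e : Module.Basis κ R A)
    (ψ : A ⊗[R] M) :
    ψ = ∑ j, e j ⊗ₜ[R] TensorProduct.lid R M (map (e.coord j) LinearMap.id ψ) := by
  classical
  conv_lhs => rw [← (equivFinsuppOfBasisLeft e).symm_apply_apply ψ]
  rw [equivFinsuppOfBasisLeft_symm_apply, Finsupp.sum_fintype _ _ (by simp)]
  simp only [equivFinsuppOfBasisLeft_apply, LinearMap.rTensor]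

theorem lid_map_mem_span_of_eq_sum_tmul {ι : Type*} [Fintype ι] {ψ : A ⊗[R] M}
    {a : ι → A} {p : ι → M} (hψ : ψ = ∑ i, a i ⊗ₜ[R] p i) (f : Module.Dual R A) :
    TensorProduct.lid R M (map f LinearMap.id ψ) ∈ Submodule.span R (Set.range p) := by
  simp only [hψ, map_sum, map_tmul, LinearMap.id_coe, id_eq, lid_tmul]
  exact Submodule.sum_mem _ fun i _ => Submodule.smul_mem _ _ (Submodule.subset_span ⟨i, rfl⟩)

theorem exists_eq_sum_tmul_of_lid_map_mem_span [Module.Free R A] [Module.Finite R A]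
    {ι : Type*} [Fintype ι] {ψ : A ⊗[R] M} {p : ι → M}
    (h : ∀ f : Module.Dual R A,
      TensorProduct.lid R M (map f LinearMap.id ψ) ∈ Submodule.span R (Set.range p)) :
    ∃ a : ι → A, ψ = ∑ i, a i ⊗ₜ[R] p i := by
  let e := Module.Free.chooseBasis R A
  choose co hco using fun j => (Submodule.mem_span_range_iff_exists_fun R).mp (h (e.coord j))
  refine ⟨fun i => ∑ j, co j i • e j, ?_⟩
  calc ψ = ∑ j, e j ⊗ₜ[R] TensorProduct.lid R M (map (e.coord j) LinearMap.id ψ) :=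
        eq_sum_basis_tmul_lid_map_coord e ψ
    _ = ∑ j, ∑ i, (co j i • e j) ⊗ₜ[R] p i := by
        simp_rw [← hco, tmul_sum, smul_tmul]
    _ = ∑ i, (∑ j, co j i • e j) ⊗ₜ[R] p i := by
        rw [Finset.sum_comm]
        simp_rw [sum_tmul]

theorem exists_eq_sum_tmul_iff_lid_map_mem_span [Module.Free R A] [Module.Finite R A]
    {ι : Type*} [Fintype ι] (ψ : A ⊗[R] M) (p : ι → M) :
    (∃ a : ι → A, ψ = ∑ i, a i ⊗ₜ[R] p i) ↔
      ∀ f : Module.Dual R A,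
        TensorProduct.lid R M (map f LinearMap.id ψ) ∈ Submodule.span R (Set.range p) :=
  ⟨fun ⟨_, hψ⟩ => lid_map_mem_span_of_eq_sum_tmul hψ, exists_eq_sum_tmul_of_lid_map_mem_span⟩

end TensorProduct

theorem tRank_eq_min_product_spanning
    {A B C : Type*}
    [AddCommGroup A] [Module ℂ A] [FiniteDimensional ℂ A]
    [AddCommGroup B] [Module ℂ B]
    [AddCommGroup C] [Module ℂ C]
    (ψ : A ⊗[ℂ] (B ⊗[ℂ] C)) :
    tRank ψ = sInf {m | ∃ p : Fin m → B ⊗[ℂ] C,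
      (∀ i, ∃ (b : B) (c : C), p i = b ⊗ₜ[ℂ] c) ∧
      Set.range (fun f : Module.Dual ℂ A =>
          (TensorProduct.lid ℂ (B ⊗[ℂ] C)) ((TensorProduct.map f LinearMap.id) ψ))
        ⊆ (Submodule.span ℂ (Set.range p) : Submodule ℂ (B ⊗[ℂ] C))} := by
  refine congrArg sInf (Set.ext fun m => ?_)
  simp only [Set.mem_ofPred_eq, Set.range_subset_iff, SetLike.mem_coe,
    ← exists_eq_sum_tmul_iff_lid_map_mem_span]
  constructor
  · rintro ⟨a, b, c, hψ⟩
    exact ⟨fun i => b i ⊗ₜ c i, fun i => ⟨b i, c i, rfl⟩, a, hψ⟩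
  · rintro ⟨p, hp, a, hψ⟩
    choose b c hbc using hp
    exact ⟨a, b, c, by simpa only [hbc] using hψ⟩
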